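/- arXiv:math/0611272 — 5 statements merged into one kernel-verified Lean document; each statement's English description precedes it below -/
import Mathlib

section
/- Every matrix A in M_2(ℂ) with Tr(A) = 0 is unitarily equivalent to an antidiagonal matrix, i.e. there exists a unitary U ∈ M_2(ℂ) and complex numbers α, β such that U A U* = ![![0, α], ![β, 0]]. -/
lemma unit_helper (x y0 : ℝ) (z : ℂ) (hz : z * (starRingEnd ℂ) z = 1) (hxy : (x:ℂ)^2 + (y0:ℂ)^2 = 1) :
    !![(x:ℂ), z*y0; -((starRingEnd ℂ) z)*y0, x] ∈ Matrix.unitaryGroup (Fin 2) ℂ := by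
  rw [Matrix.mem_unitaryGroup_iff]
  ext i j
  fin_cases i <;> fin_cases j <;>
    simp [Matrix.mul_apply, Fin.sum_univ_two, Matrix.conjTranspose_apply, Matrix.one_apply]
  · linear_combination ((y0:ℂ)^2) * hz + hxy
  · ring
  · ring
  · linear_combination ((y0:ℂ)^2) * hz + hxy

lemma diag_zero (A U : Matrix (Fin 2) (Fin 2) ℂ) (hU : U ∈ Matrix.unitaryGroup (Fin 2) ℂ)
    (hA : A.trace = 0) (h0 : (U * A * star U) 0 0 = 0) :
    ∃ α β : ℂ, U * A * star U = !![0, α; β, 0] := by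
  have hU' : star U * U = 1 := Matrix.mem_unitaryGroup_iff'.mp hU
  have htr : (U * A * star U).trace = 0 := by
    rw [Matrix.trace_mul_cycle, hU', Matrix.one_mul, hA]
  rw [Matrix.trace_fin_two, h0, zero_add] at htr
  refine ⟨(U * A * star U) 0 1, (U * A * star U) 1 0, ?_⟩
  ext i j
  fin_cases i <;> fin_cases j <;> simp [h0, htr]

-- existence of z on unit circle making b z̄ + c z a real multiple direction
lemma exists_z (p q : ℂ) : ∃ z : ℂ, z * (starRingEnd ℂ) z = 1 ∧ (p * (starRingEnd ℂ) z + q * z).im = 0 := by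
  set P := p.im + q.im with hP
  set Q := q.re - p.re with hQ
  by_cases h : P = 0 ∧ Q = 0
  · refine ⟨1, by simp, ?_⟩
    simp [Complex.add_im, Complex.mul_im]
    obtain ⟨h1, h2⟩ := h
    linarith [h1]
  · have hn : (0:ℝ) < Real.sqrt (P^2 + Q^2) := by
      apply Real.sqrt_pos.mpr
      rcases not_and_or.mp h with h1 | h1 <;> positivity
    set n := Real.sqrt (P^2 + Q^2) with hn_def
    have hn2 : n^2 = P^2 + Q^2 := Real.sq_sqrt (by positivity)
    refine ⟨⟨Q/n, -P/n⟩, ?_, ?_⟩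
    · rw [Complex.ext_iff]
      constructor
      · simp [Complex.mul_re, Complex.conj_re, Complex.conj_im]
        field_simp
        linarith [hn2]
      · simp [Complex.mul_im, Complex.conj_re, Complex.conj_im]
        ring
    · simp [Complex.add_im, Complex.mul_im, Complex.conj_re, Complex.conj_im]
      field_simp
      ring

theorem trace_zero_unitarily_equiv_antidiagonal (A : Matrix (Fin 2) (Fin 2) ℂ)
    (hA : A.trace = 0) :
    ∃ U ∈ Matrix.unitaryGroup (Fin 2) ℂ, ∃ α β : ℂ,
      U * A * star U = !![0, α; β, 0] := by
  have hA11 : A 1 1 = -A 0 0 := by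
    have h := Matrix.trace_fin_two A
    rw [hA] at h
    linear_combination -h
  by_cases ha : A 0 0 = 0
  · refine ⟨1, one_mem _, ?_⟩
    apply diag_zero A 1 (one_mem _) hA
    simp [ha]
  · obtain ⟨z, hz1, hzim⟩ := exists_z (A 0 1 / A 0 0) (A 1 0 / A 0 0)
    set r : ℝ := ((A 0 1 / A 0 0) * (starRingEnd ℂ) z + (A 1 0 / A 0 0) * z).re with hr_def
    have hw : (A 0 1 / A 0 0) * (starRingEnd ℂ) z + (A 1 0 / A 0 0) * z = (r : ℂ) := by
      rw [Complex.ext_iff]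
      exact ⟨rfl, hzim⟩
    have hw' : A 0 1 * (starRingEnd ℂ) z + A 1 0 * z = A 0 0 * (r : ℂ) := by
      have := hw
      field_simp at this
      linear_combination this
    set d := Real.sqrt (1 + (r/2)^2) with hd_def
    have hd : 0 < d := Real.sqrt_pos.mpr (by positivity)
    have hd2 : d^2 = 1 + (r/2)^2 := Real.sq_sqrt (by positivity)
    set c2 := -(r/2)/d with hc2_def
    set s2 := 1/d with hs2_def
    have hc2a : (1 + c2)/2 ≥ 0 := by
      have : |r/2| ≤ d := by
        rw [← Real.sqrt_sq_eq_abs]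
        apply Real.sqrt_le_sqrt; linarith [hd2]
      rw [hc2_def]
      rw [abs_le] at this
      have := this.2
      have h1 : -(r/2)/d ≥ -1 := by
        rw [ge_iff_le, neg_le, neg_div']
        exact (div_le_one hd).mpr (by linarith)
      linarith
    have hc2b : (1 - c2)/2 ≥ 0 := by
      have : |r/2| ≤ d := by
        rw [← Real.sqrt_sq_eq_abs]
        apply Real.sqrt_le_sqrt; linarith [hd2]
      rw [abs_le] at this
      have h1 : -(r/2)/d ≤ 1 := by
        rw [div_le_one hd]
        linarith [this.1]
      rw [hc2_def]; linarith
    set x := Real.sqrt ((1 + c2)/2) with hx_def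
    set y0 := Real.sqrt ((1 - c2)/2) with hy_def
    have hx2 : x^2 = (1 + c2)/2 := Real.sq_sqrt hc2a
    have hy2 : y0^2 = (1 - c2)/2 := Real.sq_sqrt hc2b
    have hxy : x^2 + y0^2 = 1 := by rw [hx2, hy2]; ring
    have hxy0 : x * y0 = s2/2 := by
      rw [hx_def, hy_def, ← Real.sqrt_mul hc2a]
      have heq : (1 + c2)/2 * ((1 - c2)/2) = (s2/2)^2 := by
        rw [hc2_def, hs2_def]
        field_simp
        nlinarith [hd2]
      rw [heq]
      exact Real.sqrt_sq (by positivity)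
    have hreal : x^2 - y0^2 + r * (x * y0) = 0 := by
      rw [hx2, hy2, hxy0, hc2_def, hs2_def]
      field_simp
      ring
    refine ⟨!![(x:ℂ), z*y0; -((starRingEnd ℂ) z)*y0, x],
      unit_helper x y0 z hz1 (by exact_mod_cast congrArg (Complex.ofReal) hxy), ?_⟩
    apply diag_zero A _ (unit_helper x y0 z hz1 (by exact_mod_cast congrArg (Complex.ofReal) hxy)) hA
    have hrealC : (x:ℂ)^2 - (y0:ℂ)^2 + (r:ℂ) * ((x:ℂ)*(y0:ℂ)) = 0 := by
      exact_mod_cast congrArg (Complex.ofReal) hreal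
    simp [Matrix.mul_apply, Fin.sum_univ_two, Matrix.conjTranspose_apply, Matrix.vecMul, dotProduct, hA11]
    linear_combination ((x:ℂ)*(y0:ℂ)) * hw' + A 0 0 * hrealC - A 0 0 * ((y0:ℂ)^2) * hz1
end

section
/- Two matrices X, Y in M_2(ℂ) are unitarily equivalent if and only if Tr(X) = Tr(Y), Tr(X²) = Tr(Y²) and Tr(XᴴX) = Tr(YᴴY). -/
open Matrix Complex

local notation "conj'" => starRingEnd ℂ

def UE (X Y : Matrix (Fin 2) (Fin 2) ℂ) : Prop :=
  ∃ U ∈ Matrix.unitaryGroup (Fin 2) ℂ, U * X * star U = Y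

lemma ue_refl (X : Matrix (Fin 2) (Fin 2) ℂ) : UE X X :=
  ⟨1, Submonoid.one_mem _, by simp⟩

lemma ue_symm {X Y : Matrix (Fin 2) (Fin 2) ℂ} (h : UE X Y) : UE Y X := by
  obtain ⟨U, hU, rfl⟩ := h
  refine ⟨star U, Unitary.star_mem hU, ?_⟩
  have h1 : U * star U = 1 := (Matrix.mem_unitaryGroup_iff).mp hU
  have h2 : star U * U = 1 := (Matrix.mem_unitaryGroup_iff').mp hU
  rw [star_star]
  calc star U * (U * X * star U) * U
      = (star U * U) * X * (star U * U) := by noncomm_ring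
    _ = X := by rw [h2]; simp

lemma ue_trans {X Y Z : Matrix (Fin 2) (Fin 2) ℂ} (h : UE X Y) (h' : UE Y Z) : UE X Z := by
  obtain ⟨U, hU, rfl⟩ := h
  obtain ⟨V, hV, rfl⟩ := h'
  refine ⟨V * U, Submonoid.mul_mem _ hV hU, ?_⟩
  simp only [StarMul.star_mul, star_star]
  noncomm_ring

lemma ue_traces {X Y : Matrix (Fin 2) (Fin 2) ℂ} (h : UE X Y) :
    X.trace = Y.trace ∧ (X * X).trace = (Y * Y).trace ∧
      (star X * X).trace = (star Y * Y).trace := by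
  obtain ⟨U, hU, rfl⟩ := h
  have h2 : star U * U = 1 := (Matrix.mem_unitaryGroup_iff').mp hU
  have tr : ∀ A : Matrix (Fin 2) (Fin 2) ℂ, (U * A * star U).trace = A.trace := by
    intro A
    rw [Matrix.trace_mul_cycle, h2, Matrix.one_mul]
  have key : ∀ A B : Matrix (Fin 2) (Fin 2) ℂ,
      (U * A * star U) * (U * B * star U) = U * (A * B) * star U := by
    intro A B
    calc (U * A * star U) * (U * B * star U) = U * A * (star U * U) * B * star U := by
          noncomm_ring
      _ = U * (A * B) * star U := by rw [h2]; noncomm_ring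
  have hstar : star (U * X * star U) = U * star X * star U := by
    simp only [StarMul.star_mul, star_star, Matrix.mul_assoc]
  refine ⟨(tr X).symm, ?_, ?_⟩
  · rw [key, tr]
  · rw [hstar, key, tr]

lemma schur2 (X : Matrix (Fin 2) (Fin 2) ℂ) :
    ∃ a b d : ℂ, UE X !![a, b; 0, d] := by
  -- eigenvalue / eigenvector
  obtain ⟨μ, hμ⟩ := Module.End.exists_eigenvalue (X.mulVecLin)
  obtain ⟨v, hv⟩ := hμ.exists_hasEigenvector
  have hv0 : v ≠ 0 := hv.2
  have happ : X.mulVec v = μ • v := hv.apply_eq_smul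
  set c : ℂ := v 0 with hc
  set s : ℂ := v 1 with hs
  have h0 : X 0 0 * c + X 0 1 * s = μ * c := by
    have := congrFun happ 0
    simpa [Matrix.mulVec, dotProduct, Fin.sum_univ_two] using this
  have h1 : X 1 0 * c + X 1 1 * s = μ * s := by
    have := congrFun happ 1
    simpa [Matrix.mulVec, dotProduct, Fin.sum_univ_two] using this
  have hcs : 0 < Complex.normSq c + Complex.normSq s := by
    rcases Function.ne_iff.mp hv0 with ⟨i, hi⟩
    have h0' : 0 ≤ Complex.normSq c := Complex.normSq_nonneg _
    have h1' : 0 ≤ Complex.normSq s := Complex.normSq_nonneg _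
    fin_cases i
    · have : 0 < Complex.normSq c := Complex.normSq_pos.mpr hi
      linarith
    · have : 0 < Complex.normSq s := Complex.normSq_pos.mpr hi
      linarith
  set n : ℝ := Real.sqrt (Complex.normSq c + Complex.normSq s) with hn
  have hnpos : 0 < n := Real.sqrt_pos.mpr hcs
  have hn0 : (n : ℂ) ≠ 0 := by exact_mod_cast hnpos.ne'
  have hkey : (n : ℂ) * n = conj' c * c + conj' s * s := by
    calc (n : ℂ) * n = ((n * n : ℝ) : ℂ) := by push_cast; ring
      _ = ((Complex.normSq c + Complex.normSq s : ℝ) : ℂ) := by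
          rw [Real.mul_self_sqrt hcs.le]
      _ = conj' c * c + conj' s * s := by
          push_cast
          rw [← Complex.mul_conj, ← Complex.mul_conj]; ring
  set v1 : ℂ := c / n with hv1
  set v2 : ℂ := s / n with hv2
  set V : Matrix (Fin 2) (Fin 2) ℂ := !![v1, -(conj' v2); v2, conj' v1] with hV
  have hmem : V ∈ Matrix.unitaryGroup (Fin 2) ℂ := by
    rw [Matrix.mem_unitaryGroup_iff']
    ext i j
    fin_cases i <;> fin_cases j <;>
      simp [hV, Matrix.mul_apply, Fin.sum_univ_two, Matrix.star_apply, Matrix.one_apply,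
        hv1, hv2, map_div₀, Complex.conj_ofReal] <;>
      field_simp <;>
      (first
        | ring1
        | linear_combination -hkey
        | linear_combination hkey
        | linear_combination (-2 : ℂ) * hkey
        | linear_combination (2 : ℂ) * hkey)
  have e0 : X 0 0 * v1 + X 0 1 * v2 = μ * v1 := by
    rw [hv1, hv2]; field_simp; linear_combination h0
  have e1 : X 1 0 * v1 + X 1 1 * v2 = μ * v2 := by
    rw [hv1, hv2]; field_simp; linear_combination h1
  have hT : (star V * X * V) 1 0 = 0 := by
    simp [hV, Matrix.mul_apply, Fin.sum_univ_two, Matrix.star_apply]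
    linear_combination (-v2) * e0 + v1 * e1
  refine ⟨(star V * X * V) 0 0, (star V * X * V) 0 1, (star V * X * V) 1 1,
    star V, Unitary.star_mem hmem, ?_⟩
  rw [star_star]
  conv_lhs => rw [Matrix.eta_fin_two (star V * X * V)]
  rw [hT]

lemma tri_trace1 (a b d : ℂ) : (!![a, b; 0, d]).trace = a + d := by
  simp [Matrix.trace_fin_two]

lemma tri_trace2 (a b d : ℂ) : (!![a, b; 0, d] * !![a, b; 0, d]).trace = a * a + d * d := by
  simp [Matrix.trace_fin_two, Matrix.mul_apply, Fin.sum_univ_two]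

lemma tri_trace3 (a b d : ℂ) : (star !![a, b; 0, d] * !![a, b; 0, d]).trace
    = conj' a * a + conj' b * b + conj' d * d := by
  simp [Matrix.trace_fin_two, Matrix.mul_apply, Fin.sum_univ_two, Matrix.star_apply]
  ring

lemma ue_rot (a b b' d : ℂ) (h : conj' b * b = conj' b' * b') :
    UE !![a, b; 0, d] !![a, b'; 0, d] := by
  by_cases hb : b = 0
  · have hb' : b' = 0 := by
      have : conj' b' * b' = 0 := by rw [← h, hb]; simp
      rcases mul_eq_zero.mp this with h' | h'
      · simpa using (starRingEnd ℂ).injective (by simpa using h')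
      · exact h'
    rw [hb, hb']
    exact ⟨1, Submonoid.one_mem _, by simp⟩
  · have hcb : conj' b ≠ 0 := fun h' => hb (by simpa using (starRingEnd ℂ).injective (by simpa using h'))
    set w : ℂ := conj' b' / conj' b with hw
    refine ⟨!![1, 0; 0, w], ?_, ?_⟩
    · rw [Matrix.mem_unitaryGroup_iff]
      ext i j
      fin_cases i <;> fin_cases j <;>
        simp [Matrix.mul_apply, Fin.sum_univ_two, Matrix.star_apply, Matrix.one_apply, hw,
          map_div₀] <;>
        field_simp <;>
        (first
          | ring1
          | linear_combination h
          | linear_combination -h)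
    · ext i j
      fin_cases i <;> fin_cases j <;>
        simp [Matrix.mul_apply, Fin.sum_univ_two, Matrix.star_apply, hw, map_div₀] <;>
        field_simp <;>
        (first
          | ring1
          | linear_combination h
          | linear_combination -h
          | linear_combination d * h
          | linear_combination -d * h
          | linear_combination a * h
          | linear_combination -a * h)

set_option maxHeartbeats 1000000 in
lemma ue_swap (a b b' d : ℂ) (h : conj' b * b = conj' b' * b') :
    UE !![a, b; 0, d] !![d, b'; 0, a] := by
  by_cases hb' : b' = 0
  · have hb : b = 0 := by
      have : conj' b * b = 0 := by rw [h, hb']; simp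
      rcases mul_eq_zero.mp this with h' | h'
      · simpa using (starRingEnd ℂ).injective (by simpa using h')
      · exact h'
    subst hb hb'
    refine ⟨!![0, 1; 1, 0], ?_, ?_⟩
    · rw [Matrix.mem_unitaryGroup_iff]
      ext i j
      fin_cases i <;> fin_cases j <;>
        simp [Matrix.mul_apply, Fin.sum_univ_two, Matrix.star_apply, Matrix.one_apply]
    · ext i j
      fin_cases i <;> fin_cases j <;>
        simp [Matrix.mul_apply, Fin.sum_univ_two, Matrix.star_apply]
  · have hb : b ≠ 0 := by
      intro h0
      apply hb'
      have : conj' b' * b' = 0 := by rw [← h, h0]; simp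
      rcases mul_eq_zero.mp this with h' | h'
      · simpa using (starRingEnd ℂ).injective (by simpa using h')
      · exact h'
    have hcb' : conj' b' ≠ 0 :=
      fun h' => hb' (by simpa using (starRingEnd ℂ).injective (by simpa using h'))
    set n : ℝ := Real.sqrt (Complex.normSq b + Complex.normSq (a - d)) with hn
    have hnpos : 0 < n := by
      apply Real.sqrt_pos.mpr
      have : 0 < Complex.normSq b := Complex.normSq_pos.mpr hb
      have := Complex.normSq_nonneg (a - d)
      linarith
    have hn0 : (n : ℂ) ≠ 0 := by exact_mod_cast hnpos.ne'
    have hkey : (n : ℂ) * n = conj' b * b + (conj' a - conj' d) * (a - d) := by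
      calc (n : ℂ) * n = ((n * n : ℝ) : ℂ) := by push_cast; ring
        _ = ((Complex.normSq b + Complex.normSq (a - d) : ℝ) : ℂ) := by
            rw [hn, Real.mul_self_sqrt (by
              have := Complex.normSq_nonneg b
              have := Complex.normSq_nonneg (a - d)
              linarith)]
        _ = conj' b * b + (conj' a - conj' d) * (a - d) := by
            push_cast
            rw [← Complex.mul_conj, ← Complex.mul_conj]
            simp [map_sub]
            ring
    set M : Matrix (Fin 2) (Fin 2) ℂ :=
      !![b', -(conj' a - conj' d) * b / conj' b'; a - d, b] with hM
    set U : Matrix (Fin 2) (Fin 2) ℂ := ((n : ℂ)⁻¹) • M with hU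
    have hmem : U ∈ Matrix.unitaryGroup (Fin 2) ℂ := by
      rw [Matrix.mem_unitaryGroup_iff']
      ext i j
      fin_cases i <;> fin_cases j <;>
        simp [hU, hM, Matrix.mul_apply, Fin.sum_univ_two, Matrix.star_apply, Matrix.one_apply,
          Matrix.smul_apply, map_div₀, Complex.conj_ofReal, map_sub, _root_.map_mul, map_neg] <;>
        field_simp
      · linear_combination -hkey - h
      · ring1
      · ring1
      · linear_combination ((n:ℂ)^4 - (n:ℂ)^2 * (conj' b * b) +
            (-(conj' b * b) * (1 - (n:ℂ)^2) - (n:ℂ)^2 * ((n:ℂ)^2 - 1))) * h +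
          (-((n:ℂ)^2) * (conj' b * b) - conj' b * b * (1 - (n:ℂ)^2)) * hkey
    have huu : U * star U = 1 := Matrix.mem_unitaryGroup_iff.mp hmem
    have hMT : M * !![a, b; 0, d] = !![d, b'; 0, a] * M := by
      ext i j
      fin_cases i <;> fin_cases j <;>
        (simp only [hM, Matrix.mul_apply, Fin.sum_univ_two, Matrix.cons_val', Matrix.cons_val_zero,
          Matrix.cons_val_one, Matrix.head_cons, Matrix.head_fin_const, Matrix.empty_val',
          Matrix.cons_val_fin_one, Matrix.of_apply, Fin.zero_eta, Fin.mk_one]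
         field_simp
         ring)
    have hint : U * !![a, b; 0, d] = !![d, b'; 0, a] * U := by
      rw [hU, Matrix.smul_mul, Matrix.mul_smul, hMT]
    refine ⟨U, hmem, ?_⟩
    rw [hint, Matrix.mul_assoc, huu, Matrix.mul_one]

lemma pair_eq {a1 d1 a2 d2 : ℂ} (h1 : a1 + d1 = a2 + d2)
    (h2 : a1 * a1 + d1 * d1 = a2 * a2 + d2 * d2) :
    (a1 = a2 ∧ d1 = d2) ∨ (a1 = d2 ∧ d1 = a2) := by
  have hz : (a1 - a2) * (a1 - d2) = 0 := by
    linear_combination (a1 - (a1 + d1 + a2 + d2) / 2) * h1 + (1 / 2 : ℂ) * h2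
  rcases mul_eq_zero.mp hz with h | h
  · have ha : a1 = a2 := sub_eq_zero.mp h
    exact Or.inl ⟨ha, by linear_combination h1 - ha⟩
  · have ha : a1 = d2 := sub_eq_zero.mp h
    exact Or.inr ⟨ha, by linear_combination h1 - ha⟩

theorem unitarily_equiv_iff_traces (X Y : Matrix (Fin 2) (Fin 2) ℂ) :
    (∃ U ∈ Matrix.unitaryGroup (Fin 2) ℂ, U * X * star U = Y) ↔
      (X.trace = Y.trace ∧ (X * X).trace = (Y * Y).trace ∧
        (star X * X).trace = (star Y * Y).trace) := by
  constructor
  · intro h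
    exact ue_traces h
  · rintro ⟨h1, h2, h3⟩
    obtain ⟨a1, b1, d1, hX⟩ := schur2 X
    obtain ⟨a2, b2, d2, hY⟩ := schur2 Y
    obtain ⟨e1X, e2X, e3X⟩ := ue_traces hX
    obtain ⟨e1Y, e2Y, e3Y⟩ := ue_traces hY
    have t1 : a1 + d1 = a2 + d2 := by
      calc a1 + d1 = (!![a1, b1; 0, d1]).trace := (tri_trace1 _ _ _).symm
        _ = X.trace := e1X.symm
        _ = Y.trace := h1
        _ = (!![a2, b2; 0, d2]).trace := e1Y
        _ = a2 + d2 := tri_trace1 _ _ _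
    have t2 : a1 * a1 + d1 * d1 = a2 * a2 + d2 * d2 := by
      calc a1 * a1 + d1 * d1 = (!![a1, b1; 0, d1] * !![a1, b1; 0, d1]).trace :=
            (tri_trace2 _ _ _).symm
        _ = (X * X).trace := e2X.symm
        _ = (Y * Y).trace := h2
        _ = (!![a2, b2; 0, d2] * !![a2, b2; 0, d2]).trace := e2Y
        _ = a2 * a2 + d2 * d2 := tri_trace2 _ _ _
    have t3 : conj' a1 * a1 + conj' b1 * b1 + conj' d1 * d1
        = conj' a2 * a2 + conj' b2 * b2 + conj' d2 * d2 := by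
      calc conj' a1 * a1 + conj' b1 * b1 + conj' d1 * d1
          = (star !![a1, b1; 0, d1] * !![a1, b1; 0, d1]).trace := (tri_trace3 _ _ _).symm
        _ = (star X * X).trace := e3X.symm
        _ = (star Y * Y).trace := h3
        _ = (star !![a2, b2; 0, d2] * !![a2, b2; 0, d2]).trace := e3Y
        _ = _ := tri_trace3 _ _ _
    have hTT : UE !![a1, b1; 0, d1] !![a2, b2; 0, d2] := by
      rcases pair_eq t1 t2 with ⟨rfl, rfl⟩ | ⟨rfl, rfl⟩
      · exact ue_rot _ _ _ _ (by linear_combination t3)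
      · exact ue_swap _ _ _ _ (by linear_combination t3)
    exact ue_trans hX (ue_trans hTT (ue_symm hY))
end

section
/- Let 𝒜 be a complex unital Banach algebra, let p, e, b ∈ 𝒜 with p·e = e and e·p = 0. Then for every λ ∈ ℂ, σ(e·(λ·1 + b)) ∪ {0} = σ(e·b) ∪ {0}, where σ denotes the spectrum in 𝒜. -/
private lemma spec_union_swap {A : Type*} [NormedRing A] [NormedAlgebra ℂ A]
    [CompleteSpace A] (a b : A) :
    spectrum ℂ (a * b) ∪ {0} = spectrum ℂ (b * a) ∪ {0} := by
  rw [← Set.diff_union_self, ← Set.diff_union_self (s := spectrum ℂ (b * a)),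
    spectrum.nonzero_mul_comm]

theorem spectrum_shift_matrix_unit {A : Type*} [NormedRing A] [NormedAlgebra ℂ A]
    [CompleteSpace A] (p e b : A) (hpe : p * e = e) (hep : e * p = 0) (z : ℂ) :
    spectrum ℂ (e * (z • 1 + b)) ∪ {0} = spectrum ℂ (e * b) ∪ {0} := by
  have h1 : (z • 1 + b) * e = ((z • 1 + b) * p) * e := by rw [mul_assoc, hpe]
  have h2 : e * ((z • 1 + b) * p) = e * b * p := by
    rw [← mul_assoc, mul_add, mul_smul_comm, mul_one, add_mul, smul_mul_assoc, hep,
      smul_zero, zero_add]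
  calc spectrum ℂ (e * (z • 1 + b)) ∪ {0}
      = spectrum ℂ ((z • 1 + b) * e) ∪ {0} := spec_union_swap _ _
    _ = spectrum ℂ (((z • 1 + b) * p) * e) ∪ {0} := by rw [h1]
    _ = spectrum ℂ (e * ((z • 1 + b) * p)) ∪ {0} := spec_union_swap _ _
    _ = spectrum ℂ (e * b * p) ∪ {0} := by rw [h2]
    _ = spectrum ℂ (p * (e * b)) ∪ {0} := spec_union_swap _ _
    _ = spectrum ℂ (e * b) ∪ {0} := by rw [← mul_assoc, hpe]
end

section
/- Let β₁, β₂ ≥ 1 be reals and let Ω₂ = { (α(1+β₁)(1+β₂) − (1+β₁β₂))·cos φ + i·(α(β₁−1)(β₂+1) + (1−β₁β₂))·sin φ : α ∈ [0,1], φ ∈ [0, 2π] }. Then Ω₂ equals the closed filled ellipse centered at 0 with horizontal semi-axis 1+β₁β₂ and vertical semi-axis β₁β₂ − 1, i.e. Ω₂ = { x + i y : (x/(1+β₁β₂))² + (y/(β₁β₂−1))² ≤ 1 } when β₁β₂ > 1. -/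
lemma exists_phi (u v : ℝ) (huv : u^2 + v^2 = 1) :
    ∃ φ ∈ Set.Icc (0:ℝ) (2*Real.pi), Real.cos φ = u ∧ Real.sin φ = v := by
  have hu1 : -1 ≤ u := by nlinarith [sq_nonneg v, sq_nonneg (u+1)]
  have hu2 : u ≤ 1 := by nlinarith [sq_nonneg v, sq_nonneg (u-1)]
  have hpi := Real.pi_pos
  rcases le_or_gt 0 v with hv | hv
  · refine ⟨Real.arccos u, ⟨Real.arccos_nonneg u, by linarith [Real.arccos_le_pi u]⟩,
      Real.cos_arccos hu1 hu2, ?_⟩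
    rw [Real.sin_arccos]
    have hv2 : 1 - u^2 = v^2 := by linarith
    rw [hv2, Real.sqrt_sq hv]
  · refine ⟨2*Real.pi - Real.arccos u, ⟨by linarith [Real.arccos_le_pi u],
      by linarith [Real.arccos_nonneg u]⟩, ?_, ?_⟩
    · rw [Real.cos_sub, Real.cos_two_pi, Real.sin_two_pi, Real.cos_arccos hu1 hu2]; ring
    · rw [Real.sin_sub, Real.cos_two_pi, Real.sin_two_pi, Real.sin_arccos]
      have hv2 : 1 - u^2 = v^2 := by linarith
      rw [hv2, Real.sqrt_sq_eq_abs, abs_of_neg hv]; ring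

lemma ellipse_mem (a b x y : ℝ) (ha : 0 < a) (hb : 0 < b)
    (h : x^2*b^2 + y^2*a^2 ≤ a^2*b^2) : (x/a)^2 + (y/b)^2 ≤ 1 := by
  rw [div_pow, div_pow, div_add_div _ _ (by positivity) (by positivity),
    div_le_one (by positivity)]
  nlinarith [h]

lemma ellipse_mem' (a b x y : ℝ) (ha : 0 < a) (hb : 0 < b)
    (h : (x/a)^2 + (y/b)^2 ≤ 1) : x^2*b^2 + y^2*a^2 ≤ a^2*b^2 := by
  rw [div_pow, div_pow, div_add_div _ _ (by positivity) (by positivity),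
    div_le_one (by positivity)] at h
  nlinarith [h]

set_option maxHeartbeats 2000000 in
lemma key_lemma (a b c d x y : ℝ) (ha : 0 < a) (hb : 0 < b) (hc : 0 < c) (hd : 0 ≤ d)
    (hac : a ≤ c) (hadbc : a*d ≤ b*c)
    (hr : x^2*b^2 + y^2*a^2 ≤ a^2*b^2) :
    ∃ α ∈ Set.Icc (0:ℝ) 1, ∃ φ ∈ Set.Icc (0:ℝ) (2*Real.pi),
      (α*c - a) * Real.cos φ = x ∧ (α*d - b) * Real.sin φ = y := by
  have hpi := Real.pi_pos
  have hy2 : y^2 ≤ b^2 := by nlinarith [sq_nonneg x, sq_nonneg b, mul_pos ha ha]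
  have hyb : |y| ≤ b := abs_le.mpr ⟨by nlinarith [abs_nonneg y, sq_abs y],
    by nlinarith [abs_nonneg y, sq_abs y]⟩
  have h0c : (0:ℝ) ≤ a/c := by positivity
  have hc1 : a/c ≤ 1 := by rw [div_le_one hc]; exact hac
  -- IVT
  have hcont : ContinuousOn
      (fun α : ℝ => x^2*(α*d-b)^2 + y^2*(α*c-a)^2 - (α*c-a)^2*(α*d-b)^2)
      (Set.Icc 0 (a/c)) := by
    apply Continuous.continuousOn; continuity
  have hzz : (a/c)*c - a = 0 := by field_simp; ring
  have hmem : (0:ℝ) ∈ Set.Icc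
      ((fun α : ℝ => x^2*(α*d-b)^2 + y^2*(α*c-a)^2 - (α*c-a)^2*(α*d-b)^2) 0)
      ((fun α : ℝ => x^2*(α*d-b)^2 + y^2*(α*c-a)^2 - (α*c-a)^2*(α*d-b)^2) (a/c)) := by
    constructor
    · simp only
      nlinarith [hr]
    · simp only
      rw [hzz]
      nlinarith [sq_nonneg (x*((a/c)*d - b))]
  obtain ⟨α₀, hα₀, hf⟩ := intermediate_value_Icc h0c hcont hmem
  simp only at hf
  obtain ⟨hα₀0, hα₀c⟩ := hα₀
  have hα₀1 : α₀ ≤ 1 := le_trans hα₀c hc1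
  set A₀ := α₀*c - a with hA₀_def
  set B₀ := α₀*d - b with hB₀_def
  have hB₀le : B₀ ≤ (a/c)*d - b := by
    apply sub_le_sub_right
    exact mul_le_mul_of_nonneg_right hα₀c hd
  have hBstar : (a/c)*d - b ≤ 0 := by
    rw [sub_nonpos, div_mul_eq_mul_div, div_le_iff₀ hc]
    linarith
  have hB₀0 : B₀ ≤ 0 := le_trans hB₀le hBstar
  by_cases hB : B₀ = 0
  · -- degenerate: a*d = b*c
    have hd0 : 0 < d := by
      rcases hd.lt_or_eq with h' | h'
      · exact h'
      · exfalso; rw [hB₀_def, ← h'] at hB; simp at hB; linarith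
    have hα₀eq : α₀ = b/d := by
      field_simp
      rw [hB₀_def] at hB; linarith
    have had : a*d = b*c := by
      have h1 : b/d ≤ a/c := hα₀eq ▸ hα₀c
      rw [div_le_div_iff₀ hd0 hc] at h1
      linarith
    by_cases hxy : x = 0 ∧ y = 0
    · refine ⟨a/c, ⟨h0c, hc1⟩, 0, ⟨le_refl _, by linarith⟩, ?_, ?_⟩
      · rw [Real.cos_zero, hxy.1, hzz]; ring
      · rw [Real.sin_zero, hxy.2]; ring
    · have hpos : 0 < x^2*b^2 + y^2*a^2 := by
        rcases not_and_or.mp hxy with hx | hy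
        · have h' : 0 < x^2 := by positivity
          nlinarith [sq_nonneg (y*a), mul_pos h' (mul_pos hb hb)]
        · have h' : 0 < y^2 := by positivity
          nlinarith [sq_nonneg (x*b), mul_pos h' (mul_pos ha ha)]
      obtain ⟨s, hs0, hs1, hs2⟩ : ∃ s : ℝ, 0 < s ∧ s ≤ 1 ∧
          s^2*(a^2*b^2) = x^2*b^2 + y^2*a^2 := by
        refine ⟨Real.sqrt (x^2*b^2 + y^2*a^2) / (a*b),
          div_pos (Real.sqrt_pos.mpr hpos) (mul_pos ha hb), ?_, ?_⟩
        · rw [div_le_one (by positivity)]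
          rw [show a*b = Real.sqrt ((a*b)^2) from (Real.sqrt_sq (by positivity)).symm]
          apply Real.sqrt_le_sqrt
          nlinarith [hr]
        · rw [div_pow, Real.sq_sqrt hpos.le, mul_pow]
          field_simp
      have hsa : s*a ≠ 0 := by positivity
      have hsb : s*b ≠ 0 := by positivity
      refine ⟨(1-s)*(a/c), ⟨mul_nonneg (by linarith) h0c, ?_⟩, ?_⟩
      · calc (1-s)*(a/c) ≤ 1*(a/c) := by
              apply mul_le_mul_of_nonneg_right (by linarith) h0c
          _ ≤ 1 := by rw [one_mul]; exact hc1
      · have hA : (1-s)*(a/c)*c - a = -(s*a) := by field_simp; ring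
        have hB' : (1-s)*(a/c)*d - b = -(s*b) := by
          field_simp
          linear_combination (1-s)*had
        have huv : (-x/(s*a))^2 + (-y/(s*b))^2 = 1 := by
          field_simp
          linear_combination (-1) * hs2
        obtain ⟨φ, hφ, hcos, hsin⟩ := exists_phi _ _ huv
        refine ⟨φ, hφ, ?_, ?_⟩
        · rw [hA, hcos]; field_simp
        · rw [hB', hsin]; field_simp
  · -- B₀ < 0
    have hB₀neg : B₀ < 0 := lt_of_le_of_ne hB₀0 hB
    by_cases hA : A₀ = 0
    · -- α₀ = a/c, x = 0
      have hx : x = 0 := by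
        rw [hA] at hf
        have h' : x^2 * B₀^2 = 0 := by nlinarith [hf]
        have hB2 : B₀^2 ≠ 0 := pow_ne_zero _ hB
        have hx2 : x^2 = 0 := (mul_eq_zero.mp h').resolve_right hB2
        exact pow_eq_zero_iff (by norm_num) |>.mp hx2
      have hα₀eq : α₀ = a/c := by
        rw [hA₀_def] at hA
        field_simp
        linarith
      by_cases hyB : y^2 ≤ B₀^2
      · have hv2 : (y/B₀)^2 ≤ 1 := by
          rw [div_pow, div_le_one (by positivity)]
          exact hyB
        have huv : (Real.sqrt (1 - (y/B₀)^2))^2 + (y/B₀)^2 = 1 := by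
          rw [Real.sq_sqrt (by linarith)]; ring
        obtain ⟨φ, hφ, hcos, hsin⟩ := exists_phi _ _ huv
        refine ⟨α₀, ⟨hα₀0, hα₀1⟩, φ, hφ, ?_, ?_⟩
        · rw [← hA₀_def, hA, hx]; ring
        · rw [← hB₀_def, hsin]; field_simp
      · push_neg at hyB
        have hy0 : y ≠ 0 := by
          intro h'; rw [h'] at hyB; nlinarith [sq_nonneg B₀]
        have hd0 : 0 < d := by
          rcases hd.lt_or_eq with h' | h'
          · exact h'
          · exfalso
            have hBb : B₀ = -b := by rw [hB₀_def, ← h']; ring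
            rw [hBb] at hyB; nlinarith
        have habs : -B₀ < |y| := by nlinarith [abs_nonneg y, sq_abs y]
        set α₁ := (b - |y|)/d with hα₁_def
        have hα₁0 : 0 ≤ α₁ := by
          apply div_nonneg _ hd0.le; linarith
        have hα₁le : α₁ ≤ a/c := by
          rw [hα₁_def, div_le_div_iff₀ hd0 hc]
          have hBeq : B₀ = (a/c)*d - b := by rw [hB₀_def, hα₀eq]
          rw [hBeq] at habs
          have h2 : b - |y| < (a/c)*d := by linarith
          rw [div_mul_eq_mul_div, lt_div_iff₀ hc] at h2
          linarith
        have hBα₁ : α₁*d - b = -|y| := by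
          rw [hα₁_def]; field_simp; ring
        rcases lt_or_gt_of_ne hy0 with hyneg | hypos
        · -- y < 0 : φ = π/2
          refine ⟨α₁, ⟨hα₁0, le_trans hα₁le hc1⟩, Real.pi/2,
            ⟨by linarith, by linarith⟩, ?_, ?_⟩
          · rw [Real.cos_pi_div_two, hx]; ring
          · rw [Real.sin_pi_div_two, hBα₁, abs_of_neg hyneg]; ring
        · -- y > 0 : φ = 3π/2
          refine ⟨α₁, ⟨hα₁0, le_trans hα₁le hc1⟩, Real.pi + Real.pi/2,
            ⟨by linarith, by linarith⟩, ?_, ?_⟩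
          · rw [Real.cos_add, Real.cos_pi_div_two, Real.sin_pi_div_two, Real.cos_pi,
              Real.sin_pi, hx]; ring
          · rw [Real.sin_add, Real.cos_pi_div_two, Real.sin_pi_div_two, Real.cos_pi,
              Real.sin_pi, hBα₁, abs_of_pos hypos]; ring
    · -- main case
      have huv : (x/A₀)^2 + (y/B₀)^2 = 1 := by
        field_simp
        linear_combination hf
      obtain ⟨φ, hφ, hcos, hsin⟩ := exists_phi _ _ huv
      refine ⟨α₀, ⟨hα₀0, hα₀1⟩, φ, hφ, ?_, ?_⟩
      · rw [← hA₀_def, hcos]; field_simp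
      · rw [← hB₀_def, hsin]; field_simp

set_option maxHeartbeats 1000000 in
theorem omega2_description (β₁ β₂ : ℝ) (h₁ : 1 ≤ β₁) (h₂ : 1 ≤ β₂) (h : 1 < β₁ * β₂) :
    {z : ℂ | ∃ α ∈ Set.Icc (0 : ℝ) 1, ∃ φ ∈ Set.Icc (0 : ℝ) (2 * Real.pi),
        z = (((α * (1 + β₁) * (1 + β₂) - (1 + β₁ * β₂)) * Real.cos φ : ℝ) : ℂ) +
            Complex.I * (((α * (β₁ - 1) * (β₂ + 1) + (1 - β₁ * β₂)) * Real.sin φ : ℝ) : ℂ)} =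
      {z : ℂ | (z.re / (1 + β₁ * β₂)) ^ 2 + (z.im / (β₁ * β₂ - 1)) ^ 2 ≤ 1} := by
  have ha : (0:ℝ) < 1 + β₁ * β₂ := by linarith
  have hb : (0:ℝ) < β₁ * β₂ - 1 := by linarith
  ext z
  simp only [Set.mem_setOf_eq]
  constructor
  · rintro ⟨α, ⟨hα0, hα1⟩, φ, hφ, rfl⟩
    have hre : ((((α * (1 + β₁) * (1 + β₂) - (1 + β₁ * β₂)) * Real.cos φ : ℝ) : ℂ) +
        Complex.I * (((α * (β₁ - 1) * (β₂ + 1) + (1 - β₁ * β₂)) * Real.sin φ : ℝ) : ℂ)).re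
        = (α * (1 + β₁) * (1 + β₂) - (1 + β₁ * β₂)) * Real.cos φ := by
      simp [Complex.cos_ofReal_re, Complex.sin_ofReal_re]
    have him : ((((α * (1 + β₁) * (1 + β₂) - (1 + β₁ * β₂)) * Real.cos φ : ℝ) : ℂ) +
        Complex.I * (((α * (β₁ - 1) * (β₂ + 1) + (1 - β₁ * β₂)) * Real.sin φ : ℝ) : ℂ)).im
        = (α * (β₁ - 1) * (β₂ + 1) + (1 - β₁ * β₂)) * Real.sin φ := by
      simp [Complex.cos_ofReal_re, Complex.sin_ofReal_re]
    rw [hre, him]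
    set A := α * (1 + β₁) * (1 + β₂) - (1 + β₁ * β₂) with hA
    set B := α * (β₁ - 1) * (β₂ + 1) + (1 - β₁ * β₂) with hB
    have hA2 : A^2 ≤ (1 + β₁ * β₂)^2 := by
      have hlow : -(1 + β₁ * β₂) ≤ A := by
        have : 0 ≤ α * ((1+β₁)*(1+β₂)) := by positivity
        simp only [hA]; nlinarith
      have hhigh : A ≤ 1 + β₁ * β₂ := by
        have h1 : 0 ≤ (1-α) * ((1+β₁)*(1+β₂)) := by
          apply mul_nonneg (by linarith); positivity
        have h2 : 0 ≤ (β₁-1)*(β₂-1) := by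
          apply mul_nonneg <;> linarith
        simp only [hA]; nlinarith
      nlinarith
    have hB2 : B^2 ≤ (β₁ * β₂ - 1)^2 := by
      have hlow : -(β₁ * β₂ - 1) ≤ B := by
        have : 0 ≤ α * ((β₁-1)*(β₂+1)) := by
          apply mul_nonneg hα0; apply mul_nonneg <;> linarith
        simp only [hB]; nlinarith
      have hhigh : B ≤ β₁ * β₂ - 1 := by
        have h1 : 0 ≤ (1-α) * ((β₁-1)*(β₂+1)) := by
          apply mul_nonneg (by linarith); apply mul_nonneg <;> linarith
        have h2 : 0 ≤ (β₁+1)*(β₂-1) := by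
          apply mul_nonneg <;> linarith
        simp only [hB]; nlinarith
      nlinarith
    apply ellipse_mem _ _ _ _ ha hb
    have hcs := Real.sin_sq_add_cos_sq φ
    have k1 : A^2 * Real.cos φ^2 * (β₁*β₂-1)^2
        ≤ (1+β₁*β₂)^2 * Real.cos φ^2 * (β₁*β₂-1)^2 := by
      apply mul_le_mul_of_nonneg_right _ (sq_nonneg _)
      exact mul_le_mul_of_nonneg_right hA2 (sq_nonneg _)
    have k2 : B^2 * Real.sin φ^2 * (1+β₁*β₂)^2
        ≤ (β₁*β₂-1)^2 * Real.sin φ^2 * (1+β₁*β₂)^2 := by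
      apply mul_le_mul_of_nonneg_right _ (sq_nonneg _)
      exact mul_le_mul_of_nonneg_right hB2 (sq_nonneg _)
    have keq : (1+β₁*β₂)^2 * Real.cos φ^2 * (β₁*β₂-1)^2
        + (β₁*β₂-1)^2 * Real.sin φ^2 * (1+β₁*β₂)^2 = (1+β₁*β₂)^2 * (β₁*β₂-1)^2 := by
      linear_combination ((1+β₁*β₂)^2 * (β₁*β₂-1)^2) * hcs
    nlinarith [k1, k2, keq]
  · intro hz
    have hr := ellipse_mem' _ _ _ _ ha hb hz
    have hc : (0:ℝ) < (1+β₁)*(1+β₂) := by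
      apply mul_pos <;> linarith
    have hd : (0:ℝ) ≤ (β₁-1)*(β₂+1) := by
      apply mul_nonneg <;> linarith
    have hac : 1 + β₁ * β₂ ≤ (1+β₁)*(1+β₂) := by nlinarith
    have hadbc : (1 + β₁ * β₂) * ((β₁-1)*(β₂+1)) ≤ (β₁ * β₂ - 1) * ((1+β₁)*(1+β₂)) := by
      have hb2 : (0:ℝ) ≤ β₂^2 - 1 := by nlinarith
      nlinarith [mul_nonneg (by linarith : (0:ℝ) ≤ β₁) hb2]
    obtain ⟨α, hα, φ, hφ, hx, hy⟩ :=
      key_lemma (1 + β₁ * β₂) (β₁ * β₂ - 1) ((1+β₁)*(1+β₂)) ((β₁-1)*(β₂+1))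
        z.re z.im ha hb hc hd hac hadbc hr
    refine ⟨α, hα, φ, hφ, ?_⟩
    apply Complex.ext
    · simp only [Complex.add_re, Complex.ofReal_re, Complex.mul_re, Complex.I_re,
        Complex.ofReal_im, Complex.I_im, Complex.mul_im]
      rw [← hx]; ring
    · simp only [Complex.add_im, Complex.ofReal_im, Complex.mul_im, Complex.I_re,
        Complex.ofReal_re, Complex.I_im, Complex.mul_re]
      rw [← hy]; ring
end

section
/- The integral ∫₀¹ 1 / (t(1−t)·√(1/4 − (1/2 − t)²)) dt diverges (equals +∞). -/
open MeasureTheory Set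

lemma inv_lintegral_Ioo_top :
    ∫⁻ t in Set.Ioo (0 : ℝ) 1, ENNReal.ofReal (1 / t) = ⊤ := by
  by_contra h
  have hmeas : AEStronglyMeasurable (fun t : ℝ => 1 / t)
      (volume.restrict (Set.Ioo (0 : ℝ) 1)) := by
    exact (measurable_const.div measurable_id).aestronglyMeasurable
  have hnn : 0 ≤ᵐ[volume.restrict (Set.Ioo (0 : ℝ) 1)] fun t : ℝ => 1 / t := by
    filter_upwards [ae_restrict_mem measurableSet_Ioo] with t ht
    have := ht.1
    positivity
  have hint : Integrable (fun t : ℝ => 1 / t) (volume.restrict (Set.Ioo (0 : ℝ) 1)) :=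
    (lintegral_ofReal_ne_top_iff_integrable hmeas hnn).mp h
  have hint0 : IntegrableOn (fun t : ℝ => 1 / t) (Set.Ioo (0 : ℝ) 1) := hint
  have hint' : IntegrableOn (fun t : ℝ => t ^ (-1 : ℝ)) (Set.Ioo (0 : ℝ) 1) := by
    refine hint0.congr_fun (fun t ht => ?_) measurableSet_Ioo
    rw [Real.rpow_neg_one]; exact one_div t
  rw [intervalIntegral.integrableOn_Ioo_rpow_iff one_pos] at hint'
  linarith

theorem arcsine_inverse_moment_diverges :
    ∫⁻ t in Set.Ioo (0 : ℝ) 1,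
        ENNReal.ofReal (1 / (t * (1 - t) * Real.sqrt (1 / 4 - (1 / 2 - t) ^ 2))) = ⊤ := by
  rw [eq_top_iff, ← inv_lintegral_Ioo_top]
  refine setLIntegral_mono' measurableSet_Ioo fun t ht => ?_
  obtain ⟨ht0, ht1⟩ := ht
  apply ENNReal.ofReal_le_ofReal
  have harg : (0 : ℝ) < 1 / 4 - (1 / 2 - t) ^ 2 := by nlinarith
  have hs : Real.sqrt (1 / 4 - (1 / 2 - t) ^ 2) ≤ 1 := by
    rw [show (1 : ℝ) = Real.sqrt 1 by simp]
    apply Real.sqrt_le_sqrt; nlinarith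
  have hs0 : 0 < Real.sqrt (1 / 4 - (1 / 2 - t) ^ 2) := Real.sqrt_pos.mpr harg
  have h1t : 0 < 1 - t := by linarith
  have hden : 0 < t * (1 - t) * Real.sqrt (1 / 4 - (1 / 2 - t) ^ 2) := by positivity
  apply one_div_le_one_div_of_le hden
  nlinarith [hs0.le]
end
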